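/- If a probability distribution (p_n, n ≥ 0) on the nonnegative integers with 0 < p_0 < 1 is log-convex (i.e., p_{n-1} p_{n+1} ≥ p_n² for all n ≥ 1), then it is geometrically infinitely divisible. -/

import Mathlib

open MeasureTheory Real Set

noncomputable section

/-- Convolution of two pmfs on ℕ. -/
def seqConv (f g : ℕ → ℝ) : ℕ → ℝ := fun n => ∑ k ∈ Finset.range (n + 1), f k * g (n - k)

/-- k-fold convolution power of a pmf on ℕ. -/
def seqConvPow (f : ℕ → ℝ) : ℕ → ℕ → ℝ
  | 0 => fun n => if n = 0 then 1 else 0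
  | k + 1 => seqConv f (seqConvPow f k)

/-- `f` is a probability mass function on ℕ. -/
def IsPMF (f : ℕ → ℝ) : Prop := (∀ n, 0 ≤ f n) ∧ ∑' n, f n = 1

/-- pmf of a geometric(p) random sum `X₁ + ⋯ + X_{N_p}` (N_p ≥ 1) of iid variables with pmf f. -/
def geomCompound (p : ℝ) (f : ℕ → ℝ) : ℕ → ℝ :=
  fun n => ∑' k : ℕ, p * (1 - p) ^ k * seqConvPow f (k + 1) n

/-- A distribution on ℕ is geometrically infinitely divisible. -/
def GID (q : ℕ → ℝ) : Prop :=
  ∀ p ∈ Set.Ioo (0 : ℝ) 1, ∃ f : ℕ → ℝ, IsPMF f ∧ ∀ n, q n = geomCompound p f n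

/-- Convolution of measures on ℝ (distribution of the sum of independent rv's). -/
def mconv (μ ν : Measure ℝ) : Measure ℝ :=
  Measure.map (fun x : ℝ × ℝ => x.1 + x.2) (μ.prod ν)

/-- k-fold convolution power of a measure on ℝ. -/
def mpow (μ : Measure ℝ) : ℕ → Measure ℝ
  | 0 => Measure.dirac 0
  | k + 1 => mconv μ (mpow μ k)

/-- A distribution on [0,∞) is geometrically infinitely divisible: for every p ∈ (0,1)
it is the distribution of a geometric(p) random sum of iid nonnegative rv's. -/
def GIDM (μ : Measure ℝ) : Prop :=
  ∀ p ∈ Set.Ioo (0 : ℝ) 1, ∃ ν : Measure ℝ, IsProbabilityMeasure ν ∧ ν (Set.Iio 0) = 0 ∧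
    μ = Measure.sum (fun k : ℕ => (ENNReal.ofReal (p * (1 - p) ^ k)) • mpow ν (k + 1))

/-- Laplace–Stieltjes transform of a measure on ℝ. -/
def lst (μ : Measure ℝ) (u : ℝ) : ℝ := ∫ x, Real.exp (-(u * x)) ∂μ

/-- pmf of the λ-Poisson mixture with mixing distribution μ. -/
def pmix (l : ℝ) (μ : Measure ℝ) (n : ℕ) : ℝ :=
  ∫ x, (l * x) ^ n * Real.exp (-(l * x)) / (n.factorial : ℝ) ∂μ

/-- μ is λ-quasi-geometrically infinitely divisible: its λ-Poisson mixture is g.i.d. -/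
def QGID (l : ℝ) (μ : Measure ℝ) : Prop := GID (pmix l μ)

/-- K(τ) = -φ'(τ)/φ(τ)² where φ is the LST of μ. -/
def Kfun (μ : Measure ℝ) (τ : ℝ) : ℝ := -(deriv (lst μ) τ) / (lst μ τ) ^ 2

/-- G is a probability generating function (on |z| ≤ 1). -/
def IsPGF (G : ℝ → ℝ) : Prop :=
  ∃ f : ℕ → ℝ, IsPMF f ∧ ∀ z : ℝ, |z| ≤ 1 → G z = ∑' n, f n * z ^ n

end

/-!
Let `P` be the generating function of `p`. The geometric(θ) compound of `f` has generating
function `θ F / (1 - (1 - θ) F)`, so the only candidate is `F = P / (θ + (1 - θ) P)`, and the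
task is to show that its coefficients are nonnegative (their sum is then `F(1) = 1`).
Writing `P = p 0 / (1 - B)`, i.e. `p (n + 1) = ∑ b k * p (n + 1 - k)`, gives
`F = p 0 / (c - θ B)` with `c = θ + (1 - θ) p 0`, which has nonnegative coefficients as soon as
`B` does. That is Kaluza's theorem: if the ratios `p (n + 1) / p n` increase (log-convexity),
then in `b (m + 1) * p 0 = p (m + 1) - ∑_{k ≤ m} b k * p (m + 1 - k)` each `p (m + 1 - k)` is at
most `p (m - k) * p (m + 1) / p m`, so by induction the sum is at most `p (m + 1)`.
-/

open PowerSeries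

lemma IsPMF.summable {f : ℕ → ℝ} (hf : IsPMF f) : Summable f := by
  by_contra h
  exact one_ne_zero (hf.2.symm.trans (tsum_eq_zero_of_not_summable h))

lemma IsPMF.le_one {f : ℕ → ℝ} (hf : IsPMF f) (n : ℕ) : f n ≤ 1 :=
  hf.2 ▸ hf.summable.le_tsum n fun m _ => hf.1 m

lemma hasSum_seqConv {a b : ℕ → ℝ} (ha₀ : ∀ n, 0 ≤ a n) (hb₀ : ∀ n, 0 ≤ b n)
    (ha : Summable a) (hb : Summable b) : HasSum (seqConv a b) ((∑' n, a n) * ∑' n, b n) :=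
  hasSum_sum_range_mul_of_summable_norm
    (ha.congr fun n => (Real.norm_of_nonneg (ha₀ n)).symm)
    (hb.congr fun n => (Real.norm_of_nonneg (hb₀ n)).symm)

lemma seqConv_nonneg {a b : ℕ → ℝ} (ha : ∀ n, 0 ≤ a n) (hb : ∀ n, 0 ≤ b n) (n : ℕ) :
    0 ≤ seqConv a b n :=
  Finset.sum_nonneg fun k _ => mul_nonneg (ha k) (hb _)

lemma PowerSeries.coeff_mk_mul_mk (a b : ℕ → ℝ) (n : ℕ) :
    coeff n (mk a * mk b) = seqConv a b n := by
  simp [coeff_mul, Finset.Nat.sum_antidiagonal_eq_sum_range_succ_mk, seqConv]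

section ConvolutionPowers

variable {f : ℕ → ℝ}

lemma seqConvPow_one : seqConvPow f 1 = f := by
  funext n
  simp only [seqConvPow, seqConv, mul_ite, mul_one, mul_zero, Finset.sum_range_succ, tsub_self,
    ↓reduceIte, add_eq_right]
  exact Finset.sum_eq_zero fun k hk => if_neg (by rw [Finset.mem_range] at hk; omega)

variable (hf : IsPMF f)
include hf

lemma seqConvPow_nonneg (k n : ℕ) : 0 ≤ seqConvPow f k n := by
  induction k generalizing n with
  | zero => simp only [seqConvPow]; split <;> norm_num
  | succ k ih => exact seqConv_nonneg hf.1 ih n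

lemma hasSum_seqConvPow (k : ℕ) : HasSum (seqConvPow f k) 1 := by
  induction k with
  | zero => simpa [seqConvPow] using hasSum_ite_eq (0 : ℕ) (1 : ℝ)
  | succ k ih =>
    simpa [seqConvPow, hf.2, ih.tsum_eq] using
      hasSum_seqConv hf.1 (seqConvPow_nonneg hf k) hf.summable ih.summable

lemma seqConvPow_le_one (k n : ℕ) : seqConvPow f k n ≤ 1 :=
  (hasSum_seqConvPow hf k).tsum_eq ▸
    (hasSum_seqConvPow hf k).summable.le_tsum n fun m _ => seqConvPow_nonneg hf k m

end ConvolutionPowers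

section GeometricCompound

variable {f : ℕ → ℝ} {θ : ℝ} (hf : IsPMF f) (hθ : θ ∈ Ioo 0 1)
include hf hθ

lemma summable_geomCompound_terms (n : ℕ) :
    Summable fun k : ℕ => θ * (1 - θ) ^ k * seqConvPow f (k + 1) n := by
  have h1θ : 0 ≤ 1 - θ := by linarith [hθ.2]
  refine Summable.of_nonneg_of_le
    (fun k => mul_nonneg (mul_nonneg hθ.1.le (pow_nonneg h1θ k)) (seqConvPow_nonneg hf _ _))
    (fun k => mul_le_of_le_one_right (mul_nonneg hθ.1.le (pow_nonneg h1θ k))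
      (seqConvPow_le_one hf _ _))
    ((summable_geometric_of_lt_one h1θ (by linarith [hθ.1])).mul_left θ)

lemma geomCompound_eq_add_seqConv (n : ℕ) :
    geomCompound θ f n = θ * f n + (1 - θ) * seqConv f (geomCompound θ f) n := by
  rw [geomCompound, (summable_geomCompound_terms hf hθ n).tsum_eq_zero_add]
  congr 1
  · simp [seqConvPow_one]
  · have hterm : ∀ k : ℕ, θ * (1 - θ) ^ (k + 1) * seqConvPow f (k + 2) n
        = ∑ i ∈ Finset.range (n + 1),
            (1 - θ) * f i * (θ * (1 - θ) ^ k * seqConvPow f (k + 1) (n - i)) := by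
      intro k
      rw [show seqConvPow f (k + 2) n = seqConv f (seqConvPow f (k + 1)) n from rfl, seqConv,
        Finset.mul_sum]
      exact Finset.sum_congr rfl fun i _ => by ring
    rw [tsum_congr hterm, Summable.tsum_finsetSum
      fun i _ => (summable_geomCompound_terms hf hθ (n - i)).mul_left ((1 - θ) * f i)]
    simp only [seqConv, geomCompound, Finset.mul_sum, tsum_mul_left, mul_assoc]

lemma eq_geomCompound_of_mul_eq {q : ℕ → ℝ} (h : (C θ + C (1 - θ) * mk q) * mk f = mk q) :
    q = geomCompound θ f := by
  set G := mk (geomCompound θ f)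
  have hG : G = C θ * mk f + C (1 - θ) * (mk f * G) := by
    ext n
    simp only [G, map_add, coeff_C_mul, coeff_mk, coeff_mk_mul_mk]
    exact geomCompound_eq_add_seqConv hf hθ n
  have hunit : 1 - C (1 - θ) * mk f ≠ 0 := by
    intro h0
    have := congrArg constantCoeff h0
    simp only [map_sub, map_one, map_mul, constantCoeff_C, constantCoeff_mk, map_zero] at this
    nlinarith [hf.le_one 0, hθ.1, hθ.2]
  have hGq : (1 - C (1 - θ) * mk f) * (G - mk q) = 0 := by linear_combination hG + h
  funext n
  simpa [G] using congrArg (coeff n) (sub_eq_zero.mp ((mul_eq_zero.mp hGq).resolve_left hunit)).symm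

end GeometricCompound

section LogConvex

variable {p : ℕ → ℝ} (hlc : ∀ n, p (n + 1) ^ 2 ≤ p n * p (n + 2))
include hlc

lemma eq_zero_of_logConvex_of_one_eq_zero (h1 : p 1 = 0) (n : ℕ) : p (n + 1) = 0 := by
  induction n with
  | zero => exact h1
  | succ n ih =>
    exact pow_eq_zero_iff two_ne_zero |>.mp
      (le_antisymm (by simpa [ih] using hlc (n + 1)) (sq_nonneg _))

lemma pos_of_logConvex (h0 : 0 < p 0) (h1 : 0 < p 1) (n : ℕ) : 0 < p n := by
  suffices ∀ n, 0 < p n ∧ 0 < p (n + 1) from (this n).1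
  intro n
  induction n with
  | zero => exact ⟨h0, h1⟩
  | succ n ih => exact ⟨ih.2, pos_of_mul_pos_right (by nlinarith [hlc n, ih.2]) ih.1.le⟩

lemma monotone_ratio_of_logConvex (hpos : ∀ n, 0 < p n) : Monotone fun n => p (n + 1) / p n :=
  monotone_nat_of_le_succ fun n => by
    rw [div_le_div_iff₀ (hpos n) (hpos (n + 1))]
    nlinarith [hlc n]

end LogConvex

lemma IsPMF.pos_of_logConvex {p : ℕ → ℝ} (hp : IsPMF p) (h0 : 0 < p 0) (h1 : p 0 < 1)
    (hlc : ∀ n, p (n + 1) ^ 2 ≤ p n * p (n + 2)) (n : ℕ) : 0 < p n := by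
  refine _root_.pos_of_logConvex hlc h0 ((hp.1 1).lt_of_ne fun h => h1.ne ?_) n
  rw [← hp.2, tsum_eq_single 0]
  rintro (_ | m) hm
  · exact absurd rfl hm
  · exact eq_zero_of_logConvex_of_one_eq_zero hlc h.symm m

theorem kaluza_nonneg {p b : ℕ → ℝ} (hpos : ∀ n, 0 < p n)
    (hratio : Monotone fun n => p (n + 1) / p n) (hb0 : b 0 = 0)
    (hbp : ∀ n, seqConv b p (n + 1) = p (n + 1)) (n : ℕ) : 0 ≤ b n := by
  induction n using Nat.strong_induction_on with
  | _ n ih =>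
    obtain _ | m := n
    · exact hb0.ge
    have hconv_le : seqConv b p m ≤ p m := by
      obtain _ | j := m
      · simp [seqConv, hb0, (hpos 0).le]
      · exact (hbp j).le
    have hsum_le : ∑ k ∈ Finset.range (m + 1), b k * p (m + 1 - k) ≤ p (m + 1) :=
      calc ∑ k ∈ Finset.range (m + 1), b k * p (m + 1 - k)
          = ∑ k ∈ Finset.range (m + 1), b k * p (m - k) * (p (m - k + 1) / p (m - k)) := by
            refine Finset.sum_congr rfl fun k hk => ?_
            rw [Finset.mem_range] at hk
            rw [show m + 1 - k = m - k + 1 by omega]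
            field_simp [(hpos (m - k)).ne']
        _ ≤ ∑ k ∈ Finset.range (m + 1), b k * p (m - k) * (p (m + 1) / p m) := by
            refine Finset.sum_le_sum fun k hk => ?_
            rw [Finset.mem_range] at hk
            exact mul_le_mul_of_nonneg_left (hratio (Nat.sub_le m k))
              (mul_nonneg (ih k (by omega)) (hpos _).le)
        _ = seqConv b p m * (p (m + 1) / p m) := by rw [seqConv, Finset.sum_mul]
        _ ≤ p m * (p (m + 1) / p m) :=
            mul_le_mul_of_nonneg_right hconv_le (div_pos (hpos _) (hpos _)).le
        _ = p (m + 1) := by field_simp [(hpos m).ne']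
    have hb : b (m + 1) * p 0 = p (m + 1) - ∑ k ∈ Finset.range (m + 1), b k * p (m + 1 - k) := by
      rw [← hbp m, seqConv, Finset.sum_range_succ, Nat.sub_self]
      ring
    exact nonneg_of_mul_nonneg_left (by linarith) (hpos 0)

lemma PowerSeries.coeff_nonneg_of_C_mul_eq {X Q : PowerSeries ℝ} {c s : ℝ} (hc : 0 < c)
    (hs : 0 ≤ s) (hQ0 : constantCoeff Q = 0) (hQ : ∀ n, 0 ≤ coeff n Q)
    (hX : C c * X = C s + Q * X) (n : ℕ) : 0 ≤ coeff n X := by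
  induction n using Nat.strong_induction_on with
  | _ n ih =>
    have hn := congrArg (coeff n) hX
    rw [coeff_C_mul, map_add, coeff_C, coeff_mul] at hn
    refine nonneg_of_mul_nonneg_right (hn ▸ add_nonneg (by split_ifs <;> simp [hs]) ?_) hc
    refine Finset.sum_nonneg fun ij hij => ?_
    obtain ⟨_ | i, j⟩ := ij
    · simp [hQ0]
    · exact mul_nonneg (hQ _) (ih j (by simp at hij; omega))

lemma coeff_one_sub_C_mul_inv_nonneg {p : ℕ → ℝ} (hpos : ∀ n, 0 < p n)
    (hratio : Monotone fun n => p (n + 1) / p n) (n : ℕ) :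
    0 ≤ coeff n (1 - C (p 0) * (mk p)⁻¹) := by
  set B := 1 - C (p 0) * (mk p)⁻¹
  have hinv : (mk p)⁻¹ * mk p = 1 :=
    PowerSeries.inv_mul_cancel _ (by simpa using (hpos 0).ne')
  have hBP : mk (fun k => coeff k B) * mk p = mk p - C (p 0) := by
    rw [show mk (fun k => coeff k B) = B by ext; simp]
    linear_combination (-C (p 0)) * hinv
  refine kaluza_nonneg hpos hratio (b := fun k => coeff k B) ?_ (fun k => ?_) n
  · simp [B, (hpos 0).ne']
  · rw [← coeff_mk_mul_mk, hBP]
    simp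

lemma exists_isPMF_mul_eq {p : ℕ → ℝ} (hp : IsPMF p) (h0 : 0 < p 0)
    (hB : ∀ n, 0 ≤ coeff n (1 - C (p 0) * (mk p)⁻¹)) {θ : ℝ} (hθ : θ ∈ Ioo 0 1) :
    ∃ f, IsPMF f ∧ (C θ + C (1 - θ) * mk p) * mk f = mk p := by
  obtain ⟨hθ0, hθ1⟩ := hθ
  set P := mk p
  set B := 1 - C (p 0) * P⁻¹
  set D := C θ + C (1 - θ) * P
  set f := fun n => coeff n (P * D⁻¹)
  have hPinv : P * P⁻¹ = 1 := PowerSeries.mul_inv_cancel _ (by simpa [P] using h0.ne')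
  have hDf : D * mk f = P := by
    rw [show mk f = P * D⁻¹ by ext; simp [f], mul_left_comm,
      PowerSeries.mul_inv_cancel _ (by simp [D, P]; nlinarith), mul_one]
  have hcoeff (n : ℕ) : θ * f n + (1 - θ) * seqConv p f n = p n := by
    simpa only [D, P, add_mul, mul_assoc, map_add, coeff_C_mul, coeff_mk, coeff_mk_mul_mk] using
      congrArg (coeff n) hDf
  have hf₀ : ∀ n, 0 ≤ f n := by
    refine coeff_nonneg_of_C_mul_eq (c := θ + (1 - θ) * p 0) (s := p 0) (Q := C θ * B)
      (by nlinarith) h0.le (by simp [B, P, h0.ne']) (fun n => ?_) ?_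
    · simpa [coeff_C_mul] using mul_nonneg hθ0.le (hB n)
    · rw [show P * D⁻¹ = mk f by ext; simp [f], map_add, map_mul]
      linear_combination (C (p 0) * P⁻¹) * hDf + (C (p 0) - C (1 - θ) * C (p 0) * mk f) * hPinv
  have hfp (n : ℕ) : f n ≤ p n / θ := by
    rw [le_div_iff₀ hθ0, mul_comm, ← hcoeff n]
    nlinarith [seqConv_nonneg hp.1 hf₀ n]
  have hfsum : Summable f :=
    Summable.of_nonneg_of_le hf₀ hfp (hp.summable.div_const θ)
  have hmass := ((hfsum.hasSum.mul_left θ).add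
    ((hasSum_seqConv hp.1 hf₀ hp.summable hfsum).mul_left (1 - θ))).unique
      (by simpa only [hcoeff, hp.2] using hp.summable.hasSum)
  rw [hp.2] at hmass
  exact ⟨f, ⟨hf₀, by linarith⟩, hDf⟩

/-- A log-convex distribution (p_n) on ℕ with 0 < p₀ < 1 is g.i.d. -/
theorem stmt15 (p : ℕ → ℝ) (hp : IsPMF p) (h0 : 0 < p 0) (h1 : p 0 < 1)
    (hlc : ∀ n : ℕ, p (n + 1) ^ 2 ≤ p n * p (n + 2)) :
    GID p := by
  have hpos := hp.pos_of_logConvex h0 h1 hlc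
  have hB := coeff_one_sub_C_mul_inv_nonneg hpos (monotone_ratio_of_logConvex hlc hpos)
  intro θ hθ
  obtain ⟨f, hf, hfp⟩ := exists_isPMF_mul_eq hp h0 hB hθ
  exact ⟨f, hf, congrFun (eq_geomCompound_of_mul_eq hf hθ hfp)⟩
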